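/- arXiv:2504.07700 — 9 statements merged into one kernel-verified Lean document; each statement's English description precedes it below -/
import Mathlib

section
/- Let M = (m_ij) be a symmetric real n×n matrix with zero diagonal and nonnegative off-diagonal entries. Then the matrix Φ_t(M) with entries t^{m_ij} is positive semidefinite for every t ∈ (0,1) if and only if M is conditionally negative semidefinite. -/
/-!
If `∑ cᵢ = 0`, the function `u ↦ ∑ u ^ mᵢⱼ cᵢ cⱼ` is nonnegative on `(0, 1)` and vanishes at `1`,
so its derivative `∑ mᵢⱼ cᵢ cⱼ` at `1` is nonpositive.

Conversely, fix a base point `i₀`. Testing `M` against `x - (∑ x) e_{i₀}` shows that the kernel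
`Gᵢⱼ = m_{i i₀} + m_{i₀ j} - mᵢⱼ - m_{i₀ i₀}` is positive semidefinite. By the Schur product theorem
entrywise powers, hence entrywise exponentials, of positive semidefinite matrices are positive
semidefinite. By symmetry of `M`, `t ^ mᵢⱼ = exp (L Gᵢⱼ) aᵢ aⱼ` with `L = -log t ≥ 0` and
`aᵢ = exp (L (m_{i₀ i₀} / 2 - m_{i i₀}))`, so `Φ_t(M)` is the Hadamard product of two positive
semidefinite matrices.
-/

open Matrix Filter Topology Set Real
open scoped ComplexOrder

theorem HasDerivWithinAt.nonpos_of_eventually_le_left {f : ℝ → ℝ} {f' a : ℝ}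
    (hf : HasDerivWithinAt f f' (Iio a) a) (h : ∀ᶠ x in 𝓝[<] a, f a ≤ f x) : f' ≤ 0 := by
  refine le_of_tendsto ((hasDerivWithinAt_iff_tendsto_slope' Set.self_notMem_Iio).1 hf) ?_
  filter_upwards [h, self_mem_nhdsWithin] with x hfx (hx : x < a)
  rw [slope_def_field]
  exact div_nonpos_of_nonneg_of_nonpos (sub_nonneg.2 hfx) (sub_nonpos.2 hx.le)

namespace Matrix

variable {ι : Type*} [Fintype ι]

theorem dotProduct_mulVec_eq_sum_sum (A : Matrix ι ι ℝ) (x : ι → ℝ) :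
    x ⬝ᵥ A *ᵥ x = ∑ i, ∑ j, A i j * x i * x j := by
  simp only [dotProduct, mulVec, Finset.mul_sum]
  exact Finset.sum_congr rfl fun i _ => Finset.sum_congr rfl fun j _ => by ring

theorem posSemidef_iff_isSymm_and_sum_sum_nonneg {A : Matrix ι ι ℝ} :
    A.PosSemidef ↔ A.IsSymm ∧ ∀ x : ι → ℝ, 0 ≤ ∑ i, ∑ j, A i j * x i * x j := by
  simp [posSemidef_iff_dotProduct_mulVec, IsHermitian, IsSymm,
    conjTranspose_eq_transpose_of_trivial, dotProduct_mulVec_eq_sum_sum]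

def CondNegSemidef (M : Matrix ι ι ℝ) : Prop :=
  ∀ c : ι → ℝ, ∑ i, c i = 0 → ∑ i, ∑ j, M i j * c i * c j ≤ 0

theorem condNegSemidef_of_posSemidef_rpow {M : Matrix ι ι ℝ}
    (h : ∀ t ∈ Ioo (0 : ℝ) 1, (of fun i j => t ^ M i j).PosSemidef) : M.CondNegSemidef := by
  intro c hc
  set g : ℝ → ℝ := fun u => ∑ i, ∑ j, u ^ M i j * c i * c j
  have hg : HasDerivAt g (∑ i, ∑ j, M i j * c i * c j) 1 := by
    refine HasDerivAt.fun_sum fun i _ => HasDerivAt.fun_sum fun j _ => ?_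
    simpa using
      ((hasDerivAt_rpow_const (p := M i j) (Or.inl one_ne_zero)).mul_const (c i)).mul_const (c j)
  have hg1 : g 1 = 0 := by simp [g, ← Finset.sum_mul_sum, hc]
  refine hg.hasDerivWithinAt.nonpos_of_eventually_le_left ?_
  filter_upwards [Ioo_mem_nhdsLT zero_lt_one] with u hu
  rw [hg1]
  simpa using (posSemidef_iff_isSymm_and_sum_sum_nonneg.1 (h u hu)).2 c

theorem PosSemidef.map_pow {𝕜 : Type*} [RCLike 𝕜] {A : Matrix ι ι 𝕜} (hA : A.PosSemidef)
    (k : ℕ) : (A.map (· ^ k)).PosSemidef := by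
  induction k with
  | zero =>
    convert posSemidef_vecMulVec_self_star (1 : ι → 𝕜) using 1
    ext; simp [vecMulVec]
  | succ k ih =>
    have : A.map (· ^ (k + 1)) = A ⊙ A.map (· ^ k) := by ext; simp [pow_succ']
    rw [this]
    exact hA.hadamard ih

theorem PosSemidef.map_exp {A : Matrix ι ι ℝ} (hA : A.PosSemidef) : (A.map exp).PosSemidef := by
  obtain ⟨hsymm, -⟩ := posSemidef_iff_isSymm_and_sum_sum_nonneg.1 hA
  refine posSemidef_iff_isSymm_and_sum_sum_nonneg.2 ⟨hsymm.map _, fun x => ?_⟩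
  have hexp : HasSum (fun k : ℕ => ∑ i, ∑ j, A i j ^ k * x i * x j / k.factorial)
      (∑ i, ∑ j, exp (A i j) * x i * x j) := by
    refine hasSum_sum fun i _ => hasSum_sum fun j _ => ?_
    simpa only [← exp_eq_exp_ℝ, ← mul_assoc, div_mul_eq_mul_div] using
      (NormedSpace.expSeries_div_hasSum_exp (A i j)).mul_right (x i * x j)
  refine hexp.nonneg fun k => ?_
  simp only [← Finset.sum_div]
  exact div_nonneg ((posSemidef_iff_isSymm_and_sum_sum_nonneg.1 (hA.map_pow k)).2 x)
    (by positivity)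

theorem CondNegSemidef.posSemidef_basepointKernel {M : Matrix ι ι ℝ} (hM : M.CondNegSemidef)
    (hsymm : M.IsSymm) (i₀ : ι) :
    (of fun i j => M i i₀ + M i₀ j - M i j - M i₀ i₀).PosSemidef := by
  classical
  refine posSemidef_iff_isSymm_and_sum_sum_nonneg.2 ⟨?_, fun x => ?_⟩
  · ext i j
    simp only [transpose_apply, of_apply, hsymm.apply]
    ring
  set s := ∑ i, x i
  set c : ι → ℝ := x - Pi.single i₀ s
  have hc : ∑ i, c i = 0 := by simp [c, s]
  have hrow : ∑ i, ∑ j, M i₀ j * x i * x j = ∑ j, M i₀ j * s * x j := by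
    rw [Finset.sum_comm]
    simp only [s, Finset.mul_sum, Finset.sum_mul]
  have hquad : ∑ i, ∑ j, (of fun i j => M i i₀ + M i₀ j - M i j - M i₀ i₀) i j * x i * x j
      = -∑ i, ∑ j, M i j * c i * c j := by
    simp only [c, of_apply, Pi.sub_apply, Pi.single_apply, add_mul, sub_mul, mul_sub,
      Finset.sum_add_distrib, Finset.sum_sub_distrib, mul_ite, ite_mul, mul_zero, zero_mul,
      Finset.sum_ite_irrel, Finset.sum_const_zero, Finset.sum_ite_eq', Finset.mem_univ, if_true,
      ← Finset.sum_mul, ← Finset.mul_sum, hrow]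
    ring
  linarith [hM c hc]

theorem CondNegSemidef.posSemidef_rpow {M : Matrix ι ι ℝ} (hM : M.CondNegSemidef)
    (hsymm : M.IsSymm) {t : ℝ} (ht₀ : 0 < t) (ht₁ : t ≤ 1) :
    (of fun i j => t ^ M i j).PosSemidef := by
  rcases isEmpty_or_nonempty ι with hι | ⟨⟨i₀⟩⟩
  · exact Subsingleton.elim (0 : Matrix ι ι ℝ) (of fun i j => t ^ M i j) ▸ .zero
  have hL : 0 ≤ -log t := neg_nonneg.2 (log_nonpos ht₀.le ht₁)
  set a : ι → ℝ := fun i => exp (-log t * (M i₀ i₀ / 2 - M i i₀))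
  have hΦ : of (fun i j => t ^ M i j) =
      ((-log t) • of fun i j => M i i₀ + M i₀ j - M i j - M i₀ i₀).map exp ⊙
        vecMulVec a (star a) := by
    ext i j
    simp only [of_apply, hadamard, map_apply, smul_apply, vecMulVec_apply, star_trivial, a,
      smul_eq_mul, ← exp_add, rpow_def_of_pos ht₀, hsymm.apply i₀ j]
    congr 1
    ring
  rw [hΦ]
  exact ((hM.posSemidef_basepointKernel hsymm i₀).smul hL).map_exp.hadamard
    (posSemidef_vecMulVec_self_star a)

end Matrix

theorem schoenberg_posSemidef_iff_condNegSemidef_general {n : ℕ}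
    (M : Matrix (Fin n) (Fin n) ℝ) (hsymm : M.IsSymm) :
    (∀ t ∈ Set.Ioo (0 : ℝ) 1,
        (Matrix.of fun i j => t ^ M i j : Matrix (Fin n) (Fin n) ℝ).PosSemidef) ↔
    (∀ c : Fin n → ℝ, (∑ i, c i) = 0 → ∑ i, ∑ j, M i j * c i * c j ≤ 0) :=
  ⟨condNegSemidef_of_posSemidef_rpow, fun hM _ ht =>
    CondNegSemidef.posSemidef_rpow hM hsymm ht.1 ht.2.le⟩

/-- Schoenberg: Φ_t(M) = (t^{m_ij}) is positive semidefinite for every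
t ∈ (0,1) iff M is conditionally negative semidefinite. -/
theorem schoenberg_posSemidef_iff_condNegSemidef {n : ℕ}
    (M : Matrix (Fin n) (Fin n) ℝ) (hsymm : M.IsSymm)
    (hdiag : ∀ i, M i i = 0) (hoff : ∀ i j, i ≠ j → 0 ≤ M i j) :
    (∀ t ∈ Set.Ioo (0 : ℝ) 1,
        (Matrix.of fun i j => t ^ M i j : Matrix (Fin n) (Fin n) ℝ).PosSemidef) ↔
    (∀ c : Fin n → ℝ, (∑ i, c i) = 0 → ∑ i, ∑ j, M i j * c i * c j ≤ 0) :=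
  schoenberg_posSemidef_iff_condNegSemidef_general M hsymm
end

section
/- Every metric on at most 4 points is Mossay–Tabuchi stable: if M = (m_ij) is a symmetric real 4×4 matrix with zero diagonal, strictly positive off-diagonal entries, and satisfying the triangle inequality m_ik ≤ m_ij + m_jk for all i,j,k, then for every t ∈ (0,1) the matrix Φ_t(M) with entries t^{m_ij} is positive semidefinite. -/
/-!
Writing `u = t ^ c`, the matrix `t ^ (c • δ_S)` of a weighted cut semimetric equals
`u • J + (1 - u) • (1_S 1_Sᵀ + 1_Sᶜ 1_Sᶜᵀ)`, positive semidefinite for `0 < t ≤ 1`.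
Since `t ^ (d + d')` is the Hadamard product of `t ^ d` and `t ^ d'`, the Schur product theorem
makes `t ^ d` positive semidefinite whenever `d` is a nonnegative combination of cut semimetrics.
Every metric on four points is one: if `m` is the largest of the three pairing sums
`d₀₁ + d₂₃`, `d₀₂ + d₁₃`, `d₀₃ + d₁₂`, then
`d = ∑ᵢ ½ (∑ⱼ dᵢⱼ - m) δ_{i} + ∑ₖ ½ (m - pₖ) δ_{0,k}`, where `pₖ` is the pairing sum
matching `0` with `k`; each weight is nonnegative by one triangle inequality.
-/

namespace Matrix

variable {ι κ : Type*}

theorem PosSemidef.map_rpow_add {d d' : Matrix ι ι ℝ} {t : ℝ} (ht0 : 0 < t)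
    (hd : (d.map (t ^ ·)).PosSemidef) (hd' : (d'.map (t ^ ·)).PosSemidef) :
    ((d + d').map (t ^ ·)).PosSemidef := by
  have hmul : (d + d').map (t ^ ·) = d.map (t ^ ·) ⊙ d'.map (t ^ ·) := by
    ext i j
    exact Real.rpow_add ht0 _ _
  exact hmul ▸ hd.hadamard hd'

variable [DecidableEq ι] [Finite ι]

def cutSemimetric (S : Finset ι) : Matrix ι ι ℝ :=
  of fun i j => if (i ∈ S ↔ j ∈ S) then 0 else 1

theorem posSemidef_map_rpow_smul_cutSemimetric (S : Finset ι) {c t : ℝ} (hc : 0 ≤ c)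
    (ht0 : 0 < t) (ht1 : t ≤ 1) : ((c • cutSemimetric S).map (t ^ ·)).PosSemidef := by
  set u := t ^ c
  have hu0 : 0 ≤ u := (Real.rpow_pos_of_pos ht0 c).le
  have hu1 : u ≤ 1 := Real.rpow_le_one ht0.le ht1 hc
  let a : ι → ℝ := fun i => if i ∈ S then 1 else 0
  have hdecomp : (c • cutSemimetric S).map (t ^ ·) =
      u • vecMulVec 1 1 + (1 - u) • (vecMulVec a a + vecMulVec (1 - a) (1 - a)) := by
    ext i j
    by_cases hi : i ∈ S <;> by_cases hj : j ∈ S <;>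
      simp [cutSemimetric, vecMulVec, a, u, hi, hj]
  rw [hdecomp]
  refine .add (.smul (posSemidef_vecMulVec_self_star 1) hu0) (.smul ?_ (sub_nonneg.2 hu1))
  exact .add (posSemidef_vecMulVec_self_star a) (posSemidef_vecMulVec_self_star (1 - a))

theorem posSemidef_map_rpow_sum_smul_cutSemimetric (s : Finset κ) (c : κ → ℝ)
    (hc : ∀ k ∈ s, 0 ≤ c k) (S : κ → Finset ι) {t : ℝ} (ht0 : 0 < t) (ht1 : t ≤ 1) :
    ((∑ k ∈ s, c k • cutSemimetric (S k)).map (t ^ ·)).PosSemidef := by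
  classical
  induction s using Finset.induction_on with
  | empty =>
    have hones : (0 : Matrix ι ι ℝ).map (t ^ ·) = vecMulVec 1 1 := by ext; simp [vecMulVec]
    simpa [hones] using posSemidef_vecMulVec_self_star (1 : ι → ℝ)
  | insert k s hk ih =>
    rw [Finset.sum_insert hk]
    exact (posSemidef_map_rpow_smul_cutSemimetric (S k) (hc k (s.mem_insert_self k)) ht0
      ht1).map_rpow_add ht0 (ih fun k' hk' => hc k' (Finset.mem_insert_of_mem hk'))

end Matrix

open Matrix

def maxPairingSum (M : Matrix (Fin 4) (Fin 4) ℝ) : ℝ :=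
  max (M 0 1 + M 2 3) (max (M 0 2 + M 1 3) (M 0 3 + M 1 2))

def fourPointCut : Fin 4 ⊕ Fin 3 → Finset (Fin 4)
  | .inl i => {i}
  | .inr k => {0, k.succ}

noncomputable def fourPointCutWeight (M : Matrix (Fin 4) (Fin 4) ℝ) : Fin 4 ⊕ Fin 3 → ℝ
  | .inl i => ((∑ j, M i j) - maxPairingSum M) / 2
  | .inr 0 => (maxPairingSum M - (M 0 1 + M 2 3)) / 2
  | .inr 1 => (maxPairingSum M - (M 0 2 + M 1 3)) / 2
  | .inr 2 => (maxPairingSum M - (M 0 3 + M 1 2)) / 2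

theorem maxPairingSum_le_sum_row {M : Matrix (Fin 4) (Fin 4) ℝ} (hsymm : M.IsSymm)
    (htri : ∀ i j k, M i k ≤ M i j + M j k) (i : Fin 4) : maxPairingSum M ≤ ∑ j, M i j := by
  have hs : ∀ i j : Fin 4, M j i = M i j := fun i j => hsymm.apply i j
  fin_cases i <;> simp [maxPairingSum, Fin.sum_univ_four] <;> refine ⟨?_, ?_, ?_⟩ <;>
    linarith [hs 0 1, hs 0 2, hs 0 3, hs 1 2, hs 1 3, hs 2 3,
      htri 0 0 0, htri 1 1 1, htri 2 2 2, htri 3 3 3,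
      htri 2 0 3, htri 1 0 3, htri 1 0 2, htri 2 1 3, htri 0 1 3, htri 0 1 2,
      htri 1 2 3, htri 0 2 3, htri 0 2 1, htri 1 3 2, htri 0 3 2, htri 0 3 1]

theorem fourPointCutWeight_nonneg {M : Matrix (Fin 4) (Fin 4) ℝ} (hsymm : M.IsSymm)
    (htri : ∀ i j k, M i k ≤ M i j + M j k) (k : Fin 4 ⊕ Fin 3) :
    0 ≤ fourPointCutWeight M k := by
  rcases k with i | k
  · exact div_nonneg (sub_nonneg.2 (maxPairingSum_le_sum_row hsymm htri i)) zero_le_two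
  · fin_cases k <;> exact div_nonneg (sub_nonneg.2 (by simp [maxPairingSum])) zero_le_two

theorem eq_sum_fourPointCutWeight_smul_cutSemimetric {M : Matrix (Fin 4) (Fin 4) ℝ}
    (hsymm : M.IsSymm) (hdiag : ∀ i, M i i = 0) :
    M = ∑ k, fourPointCutWeight M k • cutSemimetric (fourPointCut k) := by
  have hs : ∀ i j : Fin 4, M j i = M i j := fun i j => hsymm.apply i j
  ext i j
  fin_cases i <;> fin_cases j <;>
    simp [Fin.sum_univ_four, Fin.sum_univ_three, Matrix.sum_apply, fourPointCutWeight, fourPointCut,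
      cutSemimetric, hdiag] <;>
    linarith [hs 0 1, hs 0 2, hs 0 3, hs 1 2, hs 1 3, hs 2 3]

theorem metric_four_points_MT_stable_general
    (M : Matrix (Fin 4) (Fin 4) ℝ) (hsymm : M.IsSymm)
    (hdiag : ∀ i, M i i = 0)
    (htri : ∀ i j k, M i k ≤ M i j + M j k) :
    ∀ t ∈ Set.Ioo (0 : ℝ) 1,
      (Matrix.of fun i j => t ^ M i j : Matrix (Fin 4) (Fin 4) ℝ).PosSemidef := by
  rintro t ⟨ht0, ht1⟩
  have hcut := posSemidef_map_rpow_sum_smul_cutSemimetric Finset.univ (fourPointCutWeight M)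
    (fun k _ => fourPointCutWeight_nonneg hsymm htri k) fourPointCut ht0 ht1.le
  rwa [← eq_sum_fourPointCutWeight_smul_cutSemimetric hsymm hdiag] at hcut

/-- Every metric on 4 points is Mossay–Tabuchi stable: Φ_t(M) is
positive semidefinite for every t ∈ (0,1). -/
theorem metric_four_points_MT_stable
    (M : Matrix (Fin 4) (Fin 4) ℝ) (hsymm : M.IsSymm)
    (hdiag : ∀ i, M i i = 0) (hoff : ∀ i j, i ≠ j → 0 < M i j)
    (htri : ∀ i j k, M i k ≤ M i j + M j k) :
    ∀ t ∈ Set.Ioo (0 : ℝ) 1,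
      (Matrix.of fun i j => t ^ M i j : Matrix (Fin 4) (Fin 4) ℝ).PosSemidef :=
  metric_four_points_MT_stable_general M hsymm hdiag htri
end

section
/- For integers n,m ≥ 1 and t ∈ (0,1), the matrix Φ^{K_{n,m}}_t − (1−t²)·I has rank exactly 2. -/
/-- The freeness-of-trade matrix of the bipartite metric `K_{n,m}`: diagonal entries 1,
entries `t` across the bipartition (first `n` vs last `m` indices), entries `t²` within
each side. -/
def PhiK (n m : ℕ) (t : ℝ) : Matrix (Fin (n + m)) (Fin (n + m)) ℝ :=
  Matrix.of fun i j =>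
    if i = j then 1 else if ((i : ℕ) < n ↔ (j : ℕ) < n) then t ^ 2 else t

/-!
Subtracting `(1 - t²) • 1` turns the diagonal of `Φ` into `t²`, so the matrix only depends on
the sides of its row and column: it is `!![t², t; t, t²]` with both indices pulled back along
the side map `Fin (n + m) → Fin 2`. Pulling back along a surjection does not change the rank,
and `!![t², t; t, t²]` has determinant `t²(t² - 1) ≠ 0`.
-/

namespace Matrix

variable {ι κ ι' κ' R : Type*}

theorem rank_submatrix_of_surjective [Fintype κ] [Fintype κ'] [CommRing R]
    [StrongRankCondition R] (A : Matrix ι κ R) {r : ι' → ι} {c : κ' → κ}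
    (hr : Function.Surjective r) (hc : Function.Surjective c) :
    (A.submatrix r c).rank = A.rank := by
  refine le_antisymm (A.rank_submatrix_le r c) ?_
  obtain ⟨r', hr'⟩ := hr.hasRightInverse
  obtain ⟨c', hc'⟩ := hc.hasRightInverse
  have hA : (A.submatrix r c).submatrix r' c' = A := by
    ext i j
    simp only [submatrix_apply, hr' i, hc' j]
  calc A.rank = ((A.submatrix r c).submatrix r' c').rank := by rw [hA]
    _ ≤ (A.submatrix r c).rank := rank_submatrix_le _ _ _

theorem rank_symmetric_two_by_two {K : Type*} [Field K] {a b : K} (h : a ^ 2 ≠ b ^ 2) :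
    (!![a, b; b, a]).rank = 2 := by
  have hdet : IsUnit (!![a, b; b, a]).det := by
    rw [det_fin_two_of, isUnit_iff_ne_zero, sub_ne_zero]
    simpa only [sq] using h
  simpa using rank_of_isUnit _ ((isUnit_iff_isUnit_det _).mpr hdet)

end Matrix

def bipartiteSide (n m : ℕ) (i : Fin (n + m)) : Fin 2 :=
  if (i : ℕ) < n then 0 else 1

theorem bipartiteSide_surjective {n m : ℕ} (hn : 1 ≤ n) (hm : 1 ≤ m) :
    Function.Surjective (bipartiteSide n m) := by
  intro k
  fin_cases k
  · exact ⟨⟨0, by omega⟩, by simp [bipartiteSide]; omega⟩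
  · exact ⟨⟨n, by omega⟩, by simp [bipartiteSide]⟩

theorem bipartiteSide_eq_iff {n m : ℕ} (i j : Fin (n + m)) :
    bipartiteSide n m i = bipartiteSide n m j ↔ ((i : ℕ) < n ↔ (j : ℕ) < n) := by
  unfold bipartiteSide
  split_ifs with hi hj hj <;> simp [hi, hj]

theorem PhiK_sub_eq_submatrix (n m : ℕ) (t : ℝ) :
    PhiK n m t - (1 - t ^ 2) • (1 : Matrix (Fin (n + m)) (Fin (n + m)) ℝ) =
      (!![t ^ 2, t; t, t ^ 2]).submatrix (bipartiteSide n m) (bipartiteSide n m) := by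
  ext i j
  rw [Matrix.submatrix_apply]
  by_cases hij : i = j
  · subst hij
    simp only [PhiK, Matrix.sub_apply, Matrix.smul_apply, Matrix.one_apply_eq, Matrix.of_apply,
      if_true, smul_eq_mul, mul_one, sub_sub_cancel]
    generalize bipartiteSide n m i = a
    fin_cases a <;> rfl
  · have hside := bipartiteSide_eq_iff i j
    simp only [PhiK, Matrix.sub_apply, Matrix.smul_apply, Matrix.one_apply_ne hij,
      Matrix.of_apply, if_neg hij, smul_zero, sub_zero]
    generalize bipartiteSide n m i = a, bipartiteSide n m j = b at hside
    split_ifs with h <;> fin_cases a <;> fin_cases b <;> simp_all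

/-- Φ^{K_{n,m}}_t − (1−t²)·I has rank exactly 2. -/
theorem rank_PhiK_sub_eq_two (n m : ℕ) (hn : 1 ≤ n) (hm : 1 ≤ m)
    (t : ℝ) (ht : t ∈ Set.Ioo (0 : ℝ) 1) :
    (PhiK n m t - (1 - t ^ 2) • (1 : Matrix (Fin (n + m)) (Fin (n + m)) ℝ)).rank = 2 := by
  obtain ⟨ht0, ht1⟩ := ht
  have hdet : (t ^ 2) ^ 2 ≠ t ^ 2 :=
    (pow_lt_self_of_lt_one₀ (by positivity) (by nlinarith) one_lt_two).ne
  rw [PhiK_sub_eq_submatrix, Matrix.rank_submatrix_of_surjective _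
    (bipartiteSide_surjective hn hm) (bipartiteSide_surjective hn hm)]
  exact Matrix.rank_symmetric_two_by_two hdet
end

section
/- For integers n,m ≥ 1 with n+m ≥ 3 and t ∈ (0,1), the characteristic polynomial of Φ^{K_{n,m}}_t equals (x − (1−t²))^{n+m−2} · (x − λ₊) · (x − λ₋), where λ± = 1 + ((n+m−2)/2)·t² ± (1/2)·√(4nm t² + (n−m)² t⁴). In particular, 1 − t² is an eigenvalue of Φ^{K_{n,m}}_t of multiplicity n+m−2, and λ₊ and λ₋ are the two remaining eigenvalues. -/
/-!
Every entry of `Φ - (1 - t²) I` depends only on the sides of its two indices, so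
`Φ = (1 - t²) I + P A Pᵀ`, where `A = !![t², t; t, t²]` and `P` is the `(n + m) × 2` incidence
matrix of the bipartition. Since `PᵀP = diag(n, m)`, moving `P` around the product
(`χ(UV) = X ^ (N - 2) χ(VU)`) reduces `χ_Φ` to `(X - (1 - t²)) ^ (n + m - 2)` times the
characteristic polynomial of the `2 × 2` matrix `(1 - t²) I + A diag(n, m)`, whose roots are `λ±`.
-/

open Polynomial

open Matrix Finset

namespace Polynomial

theorem X_sq_sub_C_mul_X_add_C_eq_mul {R : Type*} [CommRing R] {a b s p : R}
    (hs : a + b = s) (hp : a * b = p) :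
    X ^ 2 - C s * X + C p = (X - C a) * (X - C b) := by
  subst hs hp
  simp only [map_add, map_mul]
  ring

end Polynomial

namespace Matrix

section

variable {ι κ R : Type*} [DecidableEq κ] [CommRing R]

theorem submatrix_eq_one_submatrix_mul_mul_transpose [Fintype κ] (A : Matrix κ κ R)
    (f : ι → κ) :
    A.submatrix f f =
      (1 : Matrix κ κ R).submatrix f id * (A * ((1 : Matrix κ κ R).submatrix f id)ᵀ) := by
  ext i j
  simp [mul_apply, one_apply]

theorem transpose_one_submatrix_mul_one_submatrix [Fintype ι] (f : ι → κ) :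
    ((1 : Matrix κ κ R).submatrix f id)ᵀ * (1 : Matrix κ κ R).submatrix f id =
      diagonal fun k => (#{i | f i = k} : R) := by
  ext k l
  simp only [mul_apply, transpose_apply, submatrix_apply, id, one_apply, diagonal_apply,
    mul_boole, ← ite_and]
  by_cases hkl : k = l
  · subst hkl
    simp [Finset.sum_boole]
  · simp only [hkl, if_false]
    exact Finset.sum_eq_zero fun i _ => if_neg fun h => hkl (h.2.symm.trans h.1)

variable [Fintype ι] [DecidableEq ι] [Fintype κ]

theorem charpoly_scalar_add (M : Matrix ι ι R) (c : R) :
    (scalar ι c + M).charpoly = M.charpoly.comp (X - C c) := by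
  simpa [sub_eq_add_neg, add_comm] using charpoly_sub_scalar M (-c)

theorem charpoly_scalar_add_mul_comm_of_le (A : Matrix ι κ R) (B : Matrix κ ι R) (c : R)
    (hle : Fintype.card κ ≤ Fintype.card ι) :
    (scalar ι c + A * B).charpoly =
      (X - C c) ^ (Fintype.card ι - Fintype.card κ) * (scalar κ c + B * A).charpoly := by
  rw [charpoly_scalar_add, charpoly_scalar_add, charpoly_mul_comm_of_le A B hle, mul_comp,
    X_pow_comp]

theorem charpoly_scalar_add_submatrix (A : Matrix κ κ R) (f : ι → κ) (c : R)
    (hle : Fintype.card κ ≤ Fintype.card ι) :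
    (scalar ι c + A.submatrix f f).charpoly =
      (X - C c) ^ (Fintype.card ι - Fintype.card κ) *
        (scalar κ c + A * diagonal fun k => (#{i | f i = k} : R)).charpoly := by
  rw [submatrix_eq_one_submatrix_mul_mul_transpose, charpoly_scalar_add_mul_comm_of_le _ _ _ hle,
    Matrix.mul_assoc, transpose_one_submatrix_mul_one_submatrix]

end

theorem charpoly_fin_two_eq_mul_of_discr_eq (B : Matrix (Fin 2) (Fin 2) ℝ) {d : ℝ}
    (hd : 0 ≤ d) (hB : B.trace ^ 2 - 4 * B.det = d) :
    B.charpoly = (X - C ((B.trace + √d) / 2)) * (X - C ((B.trace - √d) / 2)) := by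
  rw [charpoly_fin_two]
  refine X_sq_sub_C_mul_X_add_C_eq_mul (by ring) ?_
  linear_combination (-1 / 4 : ℝ) * Real.sq_sqrt hd + (1 / 4 : ℝ) * hB

end Matrix

namespace PhiK

def side (n : ℕ) {N : ℕ} (i : Fin N) : Fin 2 := if (i : ℕ) < n then 0 else 1

theorem eq_scalar_add_submatrix (n m : ℕ) (t : ℝ) :
    PhiK n m t = scalar _ (1 - t ^ 2) + !![t ^ 2, t; t, t ^ 2].submatrix (side n) (side n) := by
  ext i j
  by_cases hi : (i : ℕ) < n <;> by_cases hj : (j : ℕ) < n <;>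
    rcases eq_or_ne i j with rfl | hij <;> simp [PhiK, side, *]

theorem card_side_eq (n m : ℕ) :
    (fun k => (#{i : Fin (n + m) | side n i = k} : ℝ)) = ![(n : ℝ), m] := by
  have h0 : #{i : Fin (n + m) | side n i = 0} = n := by
    simp [side, Fin.card_filter_val_lt]
  have h1 : #{i : Fin (n + m) | side n i = 1} = m := by
    have := card_filter_add_card_filter_not (s := univ) (fun i : Fin (n + m) => side n i = 0)
    simp_all [side]
  ext k
  fin_cases k <;> simp [h0, h1]

/-- The quotient matrix of the equitable partition of `K_{n,m}` into its two sides. -/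
def quotient (n m : ℕ) (t : ℝ) : Matrix (Fin 2) (Fin 2) ℝ :=
  !![1 + (n - 1) * t ^ 2, m * t; n * t, 1 + (m - 1) * t ^ 2]

theorem scalar_add_mul_diagonal_eq_quotient (n m : ℕ) (t : ℝ) :
    scalar (Fin 2) (1 - t ^ 2) + !![t ^ 2, t; t, t ^ 2] * diagonal ![(n : ℝ), m] =
      quotient n m t := by
  ext i j
  rw [Matrix.add_apply, mul_diagonal]
  fin_cases i <;> fin_cases j <;> simp [quotient] <;> ring

theorem charpoly_eq_mul_charpoly_quotient (n m : ℕ) (hnm : 2 ≤ n + m) (t : ℝ) :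
    (PhiK n m t).charpoly = (X - C (1 - t ^ 2)) ^ (n + m - 2) * (quotient n m t).charpoly := by
  rw [eq_scalar_add_submatrix, charpoly_scalar_add_submatrix _ _ _ (by simpa using hnm),
    card_side_eq, scalar_add_mul_diagonal_eq_quotient, Fintype.card_fin, Fintype.card_fin]

theorem charpoly_quotient (n m : ℕ) (t : ℝ) :
    (quotient n m t).charpoly =
      (X - C (1 + (((n : ℝ) + m - 2) / 2) * t ^ 2
          + (1 / 2) * Real.sqrt (4 * n * m * t ^ 2 + ((n : ℝ) - m) ^ 2 * t ^ 4))) *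
        (X - C (1 + (((n : ℝ) + m - 2) / 2) * t ^ 2
          - (1 / 2) * Real.sqrt (4 * n * m * t ^ 2 + ((n : ℝ) - m) ^ 2 * t ^ 4))) := by
  rw [quotient, charpoly_fin_two_eq_mul_of_discr_eq _
    (d := 4 * n * m * t ^ 2 + ((n : ℝ) - m) ^ 2 * t ^ 4) (by positivity)]
  · simp only [trace_fin_two_of]
    congr 3 <;> ring
  · rw [trace_fin_two_of, det_fin_two_of]
    ring

end PhiK

theorem charpoly_PhiK_general (n m : ℕ) (hnm : 3 ≤ n + m)
    (t : ℝ) :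
    (PhiK n m t).charpoly =
      (X - C (1 - t ^ 2)) ^ (n + m - 2) *
        (X - C (1 + (((n : ℝ) + m - 2) / 2) * t ^ 2
            + (1 / 2) * Real.sqrt (4 * n * m * t ^ 2 + ((n : ℝ) - m) ^ 2 * t ^ 4))) *
        (X - C (1 + (((n : ℝ) + m - 2) / 2) * t ^ 2
            - (1 / 2) * Real.sqrt (4 * n * m * t ^ 2 + ((n : ℝ) - m) ^ 2 * t ^ 4))) := by
  rw [PhiK.charpoly_eq_mul_charpoly_quotient n m (by omega), PhiK.charpoly_quotient, ← mul_assoc]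

/-- the characteristic polynomial of Φ^{K_{n,m}}_t is
(x−(1−t²))^{n+m−2}·(x−λ₊)·(x−λ₋). -/
theorem charpoly_PhiK (n m : ℕ) (hn : 1 ≤ n) (hm : 1 ≤ m) (hnm : 3 ≤ n + m)
    (t : ℝ) (ht : t ∈ Set.Ioo (0 : ℝ) 1) :
    (PhiK n m t).charpoly =
      (X - C (1 - t ^ 2)) ^ (n + m - 2) *
        (X - C (1 + (((n : ℝ) + m - 2) / 2) * t ^ 2
            + (1 / 2) * Real.sqrt (4 * n * m * t ^ 2 + ((n : ℝ) - m) ^ 2 * t ^ 4))) *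
        (X - C (1 + (((n : ℝ) + m - 2) / 2) * t ^ 2
            - (1 / 2) * Real.sqrt (4 * n * m * t ^ 2 + ((n : ℝ) - m) ^ 2 * t ^ 4))) :=
  charpoly_PhiK_general n m hnm t
end

section
/- Let n,m ≥ 2 be integers with (n−1)(m−1) ≥ 1 and let t = 1/√((n−1)(m−1)), assumed to lie in (0,1]. Then 1 + ((n+m−2)/2)·t² − (1/2)·√(4nm t² + (n−m)² t⁴) = 0; equivalently, the matrix Φ^{K_{n,m}}_t is singular (0 is one of its eigenvalues). -/
lemma PhiK_apply_eq (n m : ℕ) (t : ℝ) (i j : Fin (n + m)) :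
    PhiK n m t i j =
      (if i = j then 1 - t ^ 2 else 0) + if ((i : ℕ) < n ↔ (j : ℕ) < n) then t ^ 2 else t := by
  by_cases hij : i = j <;> simp [PhiK, hij]

lemma PhiK_mulVec_blockwise_const (n m : ℕ) (t x y : ℝ) (i : Fin (n + m)) :
    (PhiK n m t).mulVec (fun j => if (j : ℕ) < n then x else y) i =
      if (i : ℕ) < n then (1 + (n - 1) * t ^ 2) * x + m * t * y
      else n * t * x + (1 + (m - 1) * t ^ 2) * y := by
  simp only [Matrix.mulVec, dotProduct, PhiK_apply_eq, add_mul, Finset.sum_add_distrib, ite_mul,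
    zero_mul, Finset.sum_ite_eq, Finset.mem_univ, Fin.sum_univ_add, Fin.val_castAdd,
    Fin.is_lt, Fin.val_natAdd, add_lt_iff_neg_left, not_lt_zero, ↓reduceIte, Finset.sum_const,
    Finset.card_univ, Fintype.card_fin, nsmul_eq_mul]
  split_ifs <;> simp_all <;> ring

lemma det_PhiK_eq_zero_of_blockDet_eq_zero (n m : ℕ) (hn : 0 < n) (hm : 0 < m) (t : ℝ)
    (h : (1 + (n - 1) * t ^ 2) * (1 + (m - 1) * t ^ 2) = n * m * t ^ 2) :
    (PhiK n m t).det = 0 := by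
  have hx : 0 < 1 + ((m : ℝ) - 1) * t ^ 2 := by
    have : (1 : ℝ) ≤ m := by exact_mod_cast hm
    nlinarith [sq_nonneg t]
  rw [← Matrix.exists_mulVec_eq_zero_iff]
  refine ⟨fun j => if (j : ℕ) < n then 1 + (m - 1) * t ^ 2 else -(n * t), ?_, ?_⟩
  · intro hv
    simpa [hn, hx.ne'] using congrFun hv ⟨0, by omega⟩
  · ext i
    rw [PhiK_mulVec_blockwise_const, Pi.zero_apply]
    split_ifs
    · linear_combination h
    · ring

lemma sqrt_discr_eq_of_mul_sq_eq_one (n m t : ℝ) (h : (n - 1) * (m - 1) * t ^ 2 = 1)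
    (hnm : 0 ≤ 2 + (n + m - 2) * t ^ 2) :
    Real.sqrt (4 * n * m * t ^ 2 + (n - m) ^ 2 * t ^ 4) = 2 + (n + m - 2) * t ^ 2 := by
  rw [← Real.sqrt_sq hnm]
  congr 1
  linear_combination 4 * (1 - t ^ 2) * h

theorem PhiK_singular_at_index_general (n m : ℕ) (hn : 2 ≤ n) (hm : 2 ≤ m)
    (t : ℝ) (ht : t = 1 / Real.sqrt (((n : ℝ) - 1) * ((m : ℝ) - 1))) :
    1 + (((n : ℝ) + m - 2) / 2) * t ^ 2
        - (1 / 2) * Real.sqrt (4 * n * m * t ^ 2 + ((n : ℝ) - m) ^ 2 * t ^ 4) = 0 ∧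
    (PhiK n m t).det = 0 := by
  have hn' : (2 : ℝ) ≤ n := by exact_mod_cast hn
  have hm' : (2 : ℝ) ≤ m := by exact_mod_cast hm
  have hD : 0 < ((n : ℝ) - 1) * ((m : ℝ) - 1) := by nlinarith
  have hDt : ((n : ℝ) - 1) * ((m : ℝ) - 1) * t ^ 2 = 1 := by
    rw [ht, div_pow, one_pow, Real.sq_sqrt hD.le, mul_one_div_cancel hD.ne']
  constructor
  · rw [sqrt_discr_eq_of_mul_sq_eq_one _ _ _ hDt (by nlinarith [sq_nonneg t])]
    ring
  · apply det_PhiK_eq_zero_of_blockDet_eq_zero n m (by omega) (by omega)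
    linear_combination (t ^ 2 - 1) * hDt

/-- at t = 1/√((n−1)(m−1)) the eigenvalue λ₋ vanishes and Φ^{K_{n,m}}_t
is singular. -/
theorem PhiK_singular_at_index (n m : ℕ) (hn : 2 ≤ n) (hm : 2 ≤ m)
    (h1 : 1 ≤ ((n : ℝ) - 1) * ((m : ℝ) - 1))
    (t : ℝ) (ht : t = 1 / Real.sqrt (((n : ℝ) - 1) * ((m : ℝ) - 1)))
    (ht1 : t ∈ Set.Ioc (0 : ℝ) 1) :
    1 + (((n : ℝ) + m - 2) / 2) * t ^ 2
        - (1 / 2) * Real.sqrt (4 * n * m * t ^ 2 + ((n : ℝ) - m) ^ 2 * t ^ 4) = 0 ∧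
    (PhiK n m t).det = 0 :=
  PhiK_singular_at_index_general n m hn hm t ht
end

section
/- Let n,m ≥ 2 be integers and t ∈ (0,1). Then Φ^{K_{n,m}}_t is positive semidefinite if and only if (n−1)(m−1)·t² ≤ 1. Consequently, the Mossay–Tabuchi stability index of K_{n,m} equals 1/√((n−1)(m−1)): Φ^{K_{n,m}}_t is positive semidefinite for all t ∈ (0,1) with t ≤ 1/√((n−1)(m−1)) and fails to be positive semidefinite for all t ∈ (0,1) with t > 1/√((n−1)(m−1)). -/
open Matrix Finset Fin

lemma sum_sum_mul_ite_eq_mul {ι : Type*} [Fintype ι] [DecidableEq ι] (s : ℝ) (y : ι → ℝ) :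
    ∑ i, ∑ j, y i * (if i = j then 1 else s) * y j =
      (1 - s) * ∑ i, y i ^ 2 + s * (∑ i, y i) ^ 2 := by
  have h : ∀ i j : ι, y i * (if i = j then 1 else s) * y j =
      (1 - s) * (if i = j then y i * y j else 0) + s * (y i * y j) := by
    intro i j; split_ifs <;> ring
  simp only [h, sum_add_distrib, ← mul_sum, sum_ite_eq, mem_univ, if_true, sq, sum_mul_sum]

section
variable (n m : ℕ) (t : ℝ)

@[simp] lemma PhiK_castAdd_castAdd (i j : Fin n) :
    PhiK n m t (castAdd m i) (castAdd m j) = if i = j then 1 else t ^ 2 := by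
  simp [PhiK]

@[simp] lemma PhiK_natAdd_natAdd (i j : Fin m) :
    PhiK n m t (natAdd n i) (natAdd n j) = if i = j then 1 else t ^ 2 := by
  simp [PhiK]

@[simp] lemma PhiK_castAdd_natAdd (i : Fin n) (j : Fin m) :
    PhiK n m t (castAdd m i) (natAdd n j) = t := by
  simp [PhiK, Fin.ext_iff]
  omega

@[simp] lemma PhiK_natAdd_castAdd (i : Fin m) (j : Fin n) :
    PhiK n m t (natAdd n i) (castAdd m j) = t := by
  simp [PhiK, Fin.ext_iff]
  omega

lemma PhiK_isHermitian : (PhiK n m t).IsHermitian := by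
  refine IsHermitian.ext fun i j => ?_
  simp only [PhiK, of_apply, star_trivial, eq_comm (a := i), Iff.comm (a := (i : ℕ) < n)]

lemma append_dotProduct_PhiK_mulVec_append (y : Fin n → ℝ) (z : Fin m → ℝ) :
    append y z ⬝ᵥ (PhiK n m t *ᵥ append y z) =
      (1 - t ^ 2) * (∑ i, y i ^ 2 + ∑ j, z j ^ 2) + t ^ 2 * ((∑ i, y i) ^ 2 + (∑ j, z j) ^ 2)
        + 2 * t * (∑ i, y i) * (∑ j, z j) := by
  have hform : ∀ x : Fin (n + m) → ℝ,
      x ⬝ᵥ (PhiK n m t *ᵥ x) = ∑ i, ∑ j, x i * PhiK n m t i j * x j := by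
    simp [dotProduct, mulVec, mul_sum, mul_assoc]
  have hcross : ∀ {k l : ℕ} (a : Fin k → ℝ) (b : Fin l → ℝ),
      ∑ i, ∑ j, a i * t * b j = t * (∑ i, a i) * ∑ j, b j := by
    intro k l a b
    rw [mul_sum (f := a), sum_mul_sum]
    simp only [mul_comm t]
  simp only [hform, sum_univ_add, append_left, append_right, PhiK_castAdd_castAdd,
    PhiK_natAdd_natAdd, PhiK_castAdd_natAdd, PhiK_natAdd_castAdd, sum_add_distrib,
    sum_sum_mul_ite_eq_mul, hcross]
  ring
end

lemma nonneg_of_sq_le_mul {N M t a b P Q : ℝ} (hN : 0 < N) (hM : 0 < M) (ht : t ^ 2 ≤ 1)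
    (hNM : (N - 1) * (M - 1) * t ^ 2 ≤ 1) (ha : a ^ 2 ≤ N * P) (hb : b ^ 2 ≤ M * Q) :
    0 ≤ (1 - t ^ 2) * (P + Q) + t ^ 2 * (a ^ 2 + b ^ 2) + 2 * t * a * b := by
  set α := M * (1 + (N - 1) * t ^ 2)
  have hα : 0 < α := by
    have : 0 < 1 + (N - 1) * t ^ 2 := by
      nlinarith [mul_nonneg (sub_nonneg.2 ht) hN.le, mul_nonneg hN.le (sq_nonneg t)]
    positivity
  have hbinary : 0 ≤ α * a ^ 2 + N * (1 + (M - 1) * t ^ 2) * b ^ 2 + 2 * N * M * t * a * b := by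
    refine nonneg_of_mul_nonneg_right ?_ hα
    have hsos : α * (α * a ^ 2 + N * (1 + (M - 1) * t ^ 2) * b ^ 2 + 2 * N * M * t * a * b) =
        (α * a + N * M * t * b) ^ 2
          + N * M * (1 - t ^ 2) * (1 - (N - 1) * (M - 1) * t ^ 2) * b ^ 2 := by
      ring
    rw [hsos]
    have : 0 ≤ 1 - t ^ 2 := by linarith
    have : 0 ≤ 1 - (N - 1) * (M - 1) * t ^ 2 := by linarith
    positivity
  refine nonneg_of_mul_nonneg_right ?_ (mul_pos hN hM)
  have : 0 ≤ 1 - t ^ 2 := by linarith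
  have hPQ : 0 ≤ (1 - t ^ 2) * (M * (N * P - a ^ 2) + N * (M * Q - b ^ 2)) := by
    have : 0 ≤ N * P - a ^ 2 := by linarith
    have : 0 ≤ M * Q - b ^ 2 := by linarith
    positivity
  calc 0 ≤ _ := add_nonneg hbinary hPQ
    _ = _ := by ring

lemma exists_neg_of_one_lt {N M t : ℝ} (hN : 0 < N) (hM : 0 < M) (ht : t ^ 2 < 1)
    (hNM : 1 < (N - 1) * (M - 1) * t ^ 2) :
    ∃ α β : ℝ, (1 - t ^ 2) * (N * α ^ 2 + M * β ^ 2) + t ^ 2 * ((N * α) ^ 2 + (M * β) ^ 2)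
      + 2 * t * (N * α) * (M * β) < 0 := by
  refine ⟨M * (1 + (M - 1) * t ^ 2), -(N * M * t), ?_⟩
  have hdet : (1 - t ^ 2) * (N * (M * (1 + (M - 1) * t ^ 2)) ^ 2 + M * (-(N * M * t)) ^ 2)
      + t ^ 2 * ((N * (M * (1 + (M - 1) * t ^ 2))) ^ 2 + (M * -(N * M * t)) ^ 2)
      + 2 * t * (N * (M * (1 + (M - 1) * t ^ 2))) * (M * -(N * M * t))
      = M * (1 + (M - 1) * t ^ 2) * (N * M * (1 - t ^ 2))
          * (1 - (N - 1) * (M - 1) * t ^ 2) := by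
    ring
  rw [hdet]
  refine mul_neg_of_pos_of_neg ?_ (by linarith)
  have : 0 < 1 - t ^ 2 := by linarith
  have : 0 < 1 + (M - 1) * t ^ 2 := by nlinarith
  positivity

lemma le_one_div_sqrt_iff {K t : ℝ} (hK : 0 < K) (ht : 0 ≤ t) : t ≤ 1 / √K ↔ K * t ^ 2 ≤ 1 := by
  rw [one_div, ← Real.sqrt_inv, Real.le_sqrt ht (inv_nonneg.2 hK.le), ← one_div, le_div_iff₀' hK]

lemma posSemidef_PhiK_iff {n m : ℕ} (hn : 0 < n) (hm : 0 < m) {t : ℝ} (ht : t ^ 2 < 1) :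
    (PhiK n m t).PosSemidef ↔ ((n : ℝ) - 1) * ((m : ℝ) - 1) * t ^ 2 ≤ 1 := by
  have hN : (0 : ℝ) < n := by exact_mod_cast hn
  have hM : (0 : ℝ) < m := by exact_mod_cast hm
  simp only [posSemidef_iff_dotProduct_mulVec, PhiK_isHermitian, star_trivial, true_and]
  constructor
  · intro hpsd
    by_contra! hK
    obtain ⟨α, β, hneg⟩ := exists_neg_of_one_lt hN hM ht hK
    have hconst := hpsd (append (fun _ => α) (fun _ => β))
    simp only [append_dotProduct_PhiK_mulVec_append, Fin.sum_const, nsmul_eq_mul] at hconst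
    linarith
  · intro hK x
    rw [← append_castAdd_natAdd (f := x), append_dotProduct_PhiK_mulVec_append]
    refine nonneg_of_sq_le_mul hN hM ht.le hK ?_ ?_
    · simpa using sq_sum_le_card_mul_sum_sq (s := univ) (f := fun i => x (castAdd m i))
    · simpa using sq_sum_le_card_mul_sum_sq (s := univ) (f := fun j => x (natAdd n j))

/-- for n,m ≥ 2 and t ∈ (0,1), Φ^{K_{n,m}}_t is positive semidefinite
iff (n−1)(m−1)t² ≤ 1; hence the Mossay–Tabuchi stability index is 1/√((n−1)(m−1)). -/
theorem PhiK_posSemidef_iff (n m : ℕ) (hn : 2 ≤ n) (hm : 2 ≤ m) :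
    (∀ t ∈ Set.Ioo (0 : ℝ) 1,
        ((PhiK n m t).PosSemidef ↔ ((n : ℝ) - 1) * ((m : ℝ) - 1) * t ^ 2 ≤ 1)) ∧
    (∀ t ∈ Set.Ioo (0 : ℝ) 1, t ≤ 1 / Real.sqrt (((n : ℝ) - 1) * ((m : ℝ) - 1)) →
        (PhiK n m t).PosSemidef) ∧
    (∀ t ∈ Set.Ioo (0 : ℝ) 1, 1 / Real.sqrt (((n : ℝ) - 1) * ((m : ℝ) - 1)) < t →
        ¬ (PhiK n m t).PosSemidef) := by
  have psd_iff (t : ℝ) (ht : t ∈ Set.Ioo (0 : ℝ) 1) :=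
    posSemidef_PhiK_iff (by omega : 0 < n) (by omega : 0 < m)
      (pow_lt_one₀ ht.1.le ht.2 two_ne_zero)
  have hK : 0 < ((n : ℝ) - 1) * ((m : ℝ) - 1) := by
    have : (2 : ℝ) ≤ n := by exact_mod_cast hn
    have : (2 : ℝ) ≤ m := by exact_mod_cast hm
    nlinarith
  refine ⟨psd_iff, fun t ht hle => ?_, fun t ht hlt hpsd => ?_⟩
  · exact (psd_iff t ht).2 ((le_one_div_sqrt_iff hK ht.1.le).1 hle)
  · exact hlt.not_ge ((le_one_div_sqrt_iff hK ht.1.le).2 ((psd_iff t ht).1 hpsd))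
end

section
/- Let n,m ≥ 2 be integers with n+m ≥ 5. Then K_{n,m} is not Mossay–Tabuchi stable: there exists t ∈ (0,1) such that the matrix Φ^{K_{n,m}}_t is not positive semidefinite (it has a strictly negative eigenvalue). -/
/-!
On a vector that is constant on each side of the bipartition, with values `a` and `b`, the
quadratic form of `Φ_t` is the binary form `α a² + 2 β a b + γ b²` with `α = n (1 + (n - 1) t²)`,
`β = n m t` and `γ = m (1 + (m - 1) t²)`. Its discriminant factors as
`α γ - β² = n m (1 - t²) (1 - (n - 1) (m - 1) t²)`, which is negative as soon as
`(n - 1) (m - 1) t² > 1`; since `(n - 1) (m - 1) ≥ 2`, the value `t = 9 / 10` works.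
-/

open Finset Matrix

section TwoClass

variable {ι : Type*} [Fintype ι] [DecidableEq ι] (p : ι → Prop) [DecidablePred p]

def twoClassMatrix (s t : ℝ) : Matrix ι ι ℝ :=
  of fun i j => if i = j then 1 else if (p i ↔ p j) then s else t

theorem twoClassMatrix_mulVec (s t a b : ℝ) :
    twoClassMatrix p s t *ᵥ (fun i => if p i then a else b) = fun i =>
      if p i then (1 - s) * a + s * #{i | p i} * a + t * #{i | ¬ p i} * b
      else (1 - s) * b + t * #{i | p i} * a + s * #{i | ¬ p i} * b := by
  ext i
  have hentry : ∀ j, twoClassMatrix p s t i j * (if p j then a else b) =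
      (if i = j then (1 - s) * (if p i then a else b) else 0) +
        if p j then (if p i then s else t) * a else (if p i then t else s) * b := by
    intro j
    by_cases hij : i = j
    · subst hij; by_cases p i <;> simp [twoClassMatrix, *] <;> ring
    · by_cases p i <;> by_cases p j <;> simp_all [twoClassMatrix]
  simp only [mulVec, dotProduct, hentry, sum_add_distrib, sum_ite_eq, mem_univ, if_true, sum_ite,
    sum_const, nsmul_eq_mul]
  split_ifs <;> ring

theorem twoClassMatrix_quadForm (s t a b : ℝ) :
    (fun i => if p i then a else b) ⬝ᵥ twoClassMatrix p s t *ᵥ (fun i => if p i then a else b) =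
      #{i | p i} * a * ((1 - s) * a + s * #{i | p i} * a + t * #{i | ¬ p i} * b) +
        #{i | ¬ p i} * b * ((1 - s) * b + t * #{i | p i} * a + s * #{i | ¬ p i} * b) := by
  rw [twoClassMatrix_mulVec]
  simp only [dotProduct, apply_ite₂ (· * ·), sum_ite, sum_const, nsmul_eq_mul]
  ring

theorem not_posSemidef_twoClassMatrix_of_discr_neg {s t : ℝ}
    (hpos : 0 < #{i | p i} * (1 + (#{i | p i} - 1) * s))
    (hdiscr : #{i | p i} * (1 + (#{i | p i} - 1) * s) * (#{i | ¬ p i} * (1 + (#{i | ¬ p i} - 1) * s))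
      < (t * #{i | p i} * #{i | ¬ p i}) ^ 2) :
    ¬ (twoClassMatrix p s t).PosSemidef := by
  intro hpsd
  set N : ℝ := ((#{i | p i} : ℕ) : ℝ)
  set K : ℝ := ((#{i | ¬ p i} : ℕ) : ℝ)
  set α := N * (1 + (N - 1) * s)
  set β := t * N * K
  set γ := K * (1 + (K - 1) * s)
  have hnonneg := hpsd.dotProduct_mulVec_nonneg fun i => if p i then β else -α
  rw [star_trivial, twoClassMatrix_quadForm] at hnonneg
  have hvalue : N * β * ((1 - s) * β + s * N * β + t * K * -α) +
      K * -α * ((1 - s) * -α + t * N * β + s * K * -α) = α * (α * γ - β ^ 2) := by ring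
  nlinarith [mul_neg_of_pos_of_neg hpos (sub_neg.mpr hdiscr)]

theorem not_posSemidef_twoClassMatrix_sq {t : ℝ} (ht : t ^ 2 < 1) (hN : 0 < #{i | p i})
    (hK : 0 < #{i | ¬ p i}) (hmix : 1 < ((#{i | p i} : ℝ) - 1) * (#{i | ¬ p i} - 1) * t ^ 2) :
    ¬ (twoClassMatrix p (t ^ 2) t).PosSemidef := by
  set N : ℝ := ((#{i | p i} : ℕ) : ℝ)
  set K : ℝ := ((#{i | ¬ p i} : ℕ) : ℝ)
  have hN' : (1 : ℝ) ≤ N := Nat.one_le_cast.mpr hN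
  have hK' : (1 : ℝ) ≤ K := Nat.one_le_cast.mpr hK
  have hdet : N * (1 + (N - 1) * t ^ 2) * (K * (1 + (K - 1) * t ^ 2)) - (t * N * K) ^ 2 =
      N * K * ((1 - t ^ 2) * (1 - (N - 1) * (K - 1) * t ^ 2)) := by ring
  refine not_posSemidef_twoClassMatrix_of_discr_neg p (by positivity) (sub_neg.mp ?_)
  rw [hdet]
  exact mul_neg_of_pos_of_neg (by positivity) (mul_neg_of_pos_of_neg (by linarith) (by linarith))

end TwoClass

theorem card_filter_fin_add_val_lt (n m : ℕ) : #{i : Fin (n + m) | (i : ℕ) < n} = n := by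
  simp [Fin.card_filter_val_lt]

theorem card_filter_fin_add_not_val_lt (n m : ℕ) : #{i : Fin (n + m) | ¬ (i : ℕ) < n} = m := by
  have := card_filter_add_card_filter_not (s := univ) fun i : Fin (n + m) => (i : ℕ) < n
  rw [card_filter_fin_add_val_lt, card_univ, Fintype.card_fin] at this
  omega

theorem PhiK_eq_twoClassMatrix (n m : ℕ) (t : ℝ) :
    PhiK n m t = twoClassMatrix (fun i : Fin (n + m) => (i : ℕ) < n) (t ^ 2) t :=
  rfl

/-- for n,m ≥ 2 with n+m ≥ 5, K_{n,m} is not Mossay–Tabuchi stable: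
some Φ^{K_{n,m}}_t with t ∈ (0,1) is not positive semidefinite. -/
theorem PhiK_not_MT_stable (n m : ℕ) (hn : 2 ≤ n) (hm : 2 ≤ m) (hnm : 5 ≤ n + m) :
    ∃ t ∈ Set.Ioo (0 : ℝ) 1, ¬ (PhiK n m t).PosSemidef := by
  refine ⟨9 / 10, by norm_num, ?_⟩
  have hmix : (2 : ℝ) ≤ (n - 1) * (m - 1) := by
    have hn' : (2 : ℝ) ≤ n := by exact_mod_cast hn
    have hm' : (2 : ℝ) ≤ m := by exact_mod_cast hm
    rcases (by omega : 3 ≤ n ∨ 3 ≤ m) with h | h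
    · have : (3 : ℝ) ≤ n := by exact_mod_cast h
      nlinarith
    · have : (3 : ℝ) ≤ m := by exact_mod_cast h
      nlinarith
  rw [PhiK_eq_twoClassMatrix]
  refine not_posSemidef_twoClassMatrix_sq (fun i : Fin (n + m) => (i : ℕ) < n) (by norm_num) ?_ ?_ ?_
  · rw [card_filter_fin_add_val_lt]; omega
  · rw [card_filter_fin_add_not_val_lt]; omega
  · rw [card_filter_fin_add_val_lt, card_filter_fin_add_not_val_lt]; nlinarith
end

section
/- Let ε > 0 and τ be real numbers with −1 < τ < 0 and τ·ε < −1. Then there exists a real number u > 1 such that u^ε·(−1 + τ + u + τu) = 1 + τ − u + τu; equivalently, u^ε + 1 + τ·(u+1)·(u^ε − 1)/(u − 1) = 0. -/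
/-! The difference `g u = u^ε (-1 + τ + u + τu) - (1 + τ - u + τu)` of the two sides vanishes
at `u = 1` with slope `g'(1) = 2(τε + 1) < 0`, so `g` is negative just to the right of `1`.
Since `1 + τ > 0`, the factor of `u^ε` is eventually positive and `g` is eventually positive,
so the intermediate value theorem gives a root `u > 1`. -/

open Set Filter Topology

theorem exists_mem_Ioo_eq_zero_of_hasDerivWithinAt_neg {f : ℝ → ℝ} {f' a b : ℝ} (hab : a < b)
    (hf : ContinuousOn f (Icc a b)) (ha : f a = 0) (hda : HasDerivWithinAt f f' (Ioi a) a)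
    (hf' : f' < 0) (hb : 0 < f b) : ∃ x ∈ Ioo a b, f x = 0 := by
  obtain ⟨z, hz_slope, hza, hzb⟩ :=
    ((hda.limsup_slope_le' (lt_irrefl a) hf').and (Ioo_mem_nhdsGT hab)).exists
  have hfz : f z < 0 := by
    rwa [slope_def_field, ha, sub_zero, div_lt_iff₀ (sub_pos.2 hza), zero_mul] at hz_slope
  obtain ⟨x, hx, hfx⟩ := intermediate_value_Ico hzb.le
    (hf.mono (Icc_subset_Icc hza.le le_rfl)) ⟨hfz.le, hb⟩
  exact ⟨x, ⟨hza.trans_le hx.1, hx.2⟩, hfx⟩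

namespace NontrivialRoot

noncomputable def rootFn (ε τ u : ℝ) : ℝ :=
  u ^ ε * (-1 + τ + u + τ * u) - (1 + τ - u + τ * u)

variable {ε τ u : ℝ}

theorem rootFn_one : rootFn ε τ 1 = 0 := by
  simp [rootFn]

theorem hasDerivAt_rootFn_one : HasDerivAt (rootFn ε τ) (2 * (τ * ε + 1)) 1 := by
  have hpow : HasDerivAt (fun u : ℝ ↦ u ^ ε) ε 1 := by
    simpa using Real.hasDerivAt_rpow_const (x := 1) (p := ε) (Or.inl one_ne_zero)
  have hlin (c d : ℝ) : HasDerivAt (fun u : ℝ ↦ c + d * u) d 1 := by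
    simpa using ((hasDerivAt_id (1 : ℝ)).const_mul d).const_add c
  have hfun : rootFn ε τ = fun u ↦ u ^ ε * (-1 + τ + (1 + τ) * u) - (1 + τ + (τ - 1) * u) := by
    funext u
    simp only [rootFn]
    ring
  rw [hfun]
  refine ((hpow.fun_mul (hlin (-1 + τ) (1 + τ))).fun_sub (hlin (1 + τ) (τ - 1))).congr_deriv ?_
  simp only [Real.one_rpow]
  ring

theorem continuousOn_rootFn : ContinuousOn (rootFn ε τ) (Ioi 0) := by
  intro u hu
  have hpow := Real.continuousAt_rpow_const u ε (Or.inl (ne_of_gt hu))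
  exact ((hpow.mul (by fun_prop)).sub (by fun_prop)).continuousWithinAt

theorem rootFn_pos (hε : 0 ≤ ε) (hu : 1 < u) (hτu : 1 - τ < (1 + τ) * u) :
    0 < rootFn ε τ u := by
  have hpow : 1 ≤ u ^ ε := Real.one_le_rpow hu.le hε
  have hrearrange : rootFn ε τ u = u ^ ε * ((1 + τ) * u - (1 - τ)) + ((1 - τ) * u - (1 + τ)) := by
    simp only [rootFn]
    ring
  rw [hrearrange]
  nlinarith

theorem eventually_rootFn_pos (hε : 0 ≤ ε) (hτ : -1 < τ) :
    ∀ᶠ u in atTop, 1 < u ∧ 0 < rootFn ε τ u := by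
  have hlarge : ∀ᶠ u in atTop, 1 - τ < (1 + τ) * u :=
    (tendsto_id.const_mul_atTop (by linarith)).eventually_gt_atTop (1 - τ)
  filter_upwards [eventually_gt_atTop 1, hlarge] with u hu hτu
  exact ⟨hu, rootFn_pos hε hu hτu⟩

theorem rootFn_eq_zero_iff (hu : u ≠ 1) :
    rootFn ε τ u = 0 ↔ u ^ ε + 1 + τ * (u + 1) * (u ^ ε - 1) / (u - 1) = 0 := by
  have hu' : u - 1 ≠ 0 := sub_ne_zero.2 hu
  rw [add_div' _ _ _ hu', div_eq_zero_iff, or_iff_left hu', rootFn]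
  constructor <;> intro h <;> linear_combination h

end NontrivialRoot

open NontrivialRoot in
theorem exists_nontrivial_root_general (ε τ : ℝ) (hε : 0 < ε) (hτ₁ : -1 < τ)
    (hτε : τ * ε < -1) :
    ∃ u : ℝ, 1 < u ∧
      u ^ ε * (-1 + τ + u + τ * u) = 1 + τ - u + τ * u ∧
      u ^ ε + 1 + τ * (u + 1) * (u ^ ε - 1) / (u - 1) = 0 := by
  obtain ⟨b, hb1, hb⟩ := (eventually_rootFn_pos hε.le hτ₁).exists
  obtain ⟨u, hu, hroot⟩ := exists_mem_Ioo_eq_zero_of_hasDerivWithinAt_neg hb1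
    (continuousOn_rootFn.mono fun x hx ↦ zero_lt_one.trans_le hx.1) rootFn_one
    hasDerivAt_rootFn_one.hasDerivWithinAt (by linarith) hb
  exact ⟨u, hu.1, sub_eq_zero.1 hroot, (rootFn_eq_zero_iff hu.1.ne').1 hroot⟩

/-- for ε > 0 and −1 < τ < 0 with τε < −1, there is a nontrivial root
u > 1 of u^ε(−1+τ+u+τu) = 1+τ−u+τu, equivalently of
u^ε + 1 + τ(u+1)(u^ε−1)/(u−1) = 0. -/
theorem exists_nontrivial_root (ε τ : ℝ) (hε : 0 < ε) (hτ₁ : -1 < τ) (hτ₂ : τ < 0)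
    (hτε : τ * ε < -1) :
    ∃ u : ℝ, 1 < u ∧
      u ^ ε * (-1 + τ + u + τ * u) = 1 + τ - u + τ * u ∧
      u ^ ε + 1 + τ * (u + 1) * (u ^ ε - 1) / (u - 1) = 0 :=
  exists_nontrivial_root_general ε τ hε hτ₁ hτε
end

section
/- Let λ_a, λ_b, ε be real numbers with λ_a > 0, |λ_b| < λ_a, ε > 0, and ε·λ_b/λ_a < −1. Then there exist real numbers x and y with y ≠ 0 such that x + y > 0, x − y > 0, λ_a·x + λ_b·y > 0, λ_a·x − λ_b·y > 0, and (x+y)^{−1/ε} = λ_a·x + λ_b·y and (x−y)^{−1/ε} = λ_a·x − λ_b·y. -/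
/-!
With `p = x + y`, `q = x - y` and `α = 1/ε` the system reads `p^(-α) = L₁(p, q)`,
`q^(-α) = L₂(p, q)` with `L` linear. The left side is homogeneous of degree `-α ≠ 1`, so along a
ray `q = c p` the equations can be solved by rescaling as soon as the two sides are parallel, which
for `c ∈ (0, 1)` means `asymmetryRatio α c = -λ_b/λ_a`. This ratio tends to `1` as `c → 0` and to
`d/dc c^α |_{c=1} = α` as `c → 1`, and the hypotheses say precisely that `α < -λ_b/λ_a < 1`, so the
intermediate value theorem provides the direction; `c ≠ 1` gives `y ≠ 0`.
-/

open Real Filter Set Topology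

theorem tendsto_one_sub_rpow_div_one_sub (p : ℝ) :
    Tendsto (fun x : ℝ => (1 - x ^ p) / (1 - x)) (𝓝[≠] 1) (𝓝 p) := by
  have hderiv : HasDerivAt (fun x : ℝ => x ^ p) p 1 := by
    simpa using hasDerivAt_rpow_const (x := 1) (p := p) (Or.inl one_ne_zero)
  convert hasDerivAt_iff_tendsto_slope.mp hderiv using 2 with x
  rw [slope_def_field, one_rpow, ← neg_sub x, ← neg_sub (x ^ p), neg_div_neg_eq]

noncomputable def asymmetryRatio (α c : ℝ) : ℝ :=
  (1 - c ^ α) / (1 - c) * ((1 + c) / (1 + c ^ α))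

theorem tendsto_asymmetryRatio_nhdsLT_one (α : ℝ) :
    Tendsto (asymmetryRatio α) (𝓝[<] 1) (𝓝 α) := by
  have hcont : ContinuousAt (fun c : ℝ => (1 + c) / (1 + c ^ α)) 1 := by
    refine (continuousAt_const.add continuousAt_id).div
      (continuousAt_const.add (continuousAt_rpow_const 1 α (Or.inl one_ne_zero))) ?_
    norm_num
  show Tendsto (fun c => (1 - c ^ α) / (1 - c) * ((1 + c) / (1 + c ^ α))) _ _
  convert ((tendsto_one_sub_rpow_div_one_sub α).mono_left
    (nhdsWithin_mono 1 (s := Iio 1) fun _ hx => ne_of_lt hx)).mul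
    (hcont.tendsto.mono_left nhdsWithin_le_nhds) using 2
  norm_num

theorem continuousOn_asymmetryRatio {α : ℝ} (hα : 0 < α) :
    ContinuousOn (asymmetryRatio α) (Ico 0 1) := by
  intro c ⟨hc0, hc1⟩
  have hcα : ContinuousAt (fun c : ℝ => c ^ α) c := continuousAt_rpow_const c α (Or.inr hα.le)
  have hpos : 0 < 1 + c ^ α := by have := rpow_nonneg hc0 α; linarith
  exact (((continuousAt_const.sub hcα).div (continuousAt_const.sub continuousAt_id)
    (sub_ne_zero.mpr hc1.ne')).mul ((continuousAt_const.add continuousAt_id).div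
      (continuousAt_const.add hcα) hpos.ne')).continuousWithinAt

theorem tendsto_asymmetryRatio_nhdsGT_zero {α : ℝ} (hα : 0 < α) :
    Tendsto (asymmetryRatio α) (𝓝[>] 0) (𝓝 1) := by
  have hIco : Ico (0 : ℝ) 1 ∈ 𝓝[>] 0 :=
    mem_of_superset (Ioo_mem_nhdsGT zero_lt_one) Ioo_subset_Ico_self
  convert ((continuousOn_asymmetryRatio hα) 0 ⟨le_rfl, zero_lt_one⟩).tendsto.mono_left
    (nhdsWithin_le_of_mem hIco)
  simp [asymmetryRatio, zero_rpow hα.ne']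

theorem Ioo_subset_image_asymmetryRatio {α : ℝ} (hα : 0 < α) :
    Ioo α 1 ⊆ asymmetryRatio α '' Ioo 0 1 :=
  isPreconnected_Ioo.intermediate_value_Ioo (le_principal_iff.mpr (Ioo_mem_nhdsLT zero_lt_one))
    (le_principal_iff.mpr (Ioo_mem_nhdsGT zero_lt_one))
    ((continuousOn_asymmetryRatio hα).mono Ioo_subset_Ico_self)
    (tendsto_asymmetryRatio_nhdsLT_one α) (tendsto_asymmetryRatio_nhdsGT_zero hα)

theorem exists_rpow_neg_eq_mul {K α : ℝ} (hK : 0 < K) (hα : α + 1 ≠ 0) :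
    ∃ u > 0, u ^ (-α) = K * u := by
  refine ⟨K ^ (-(α + 1)⁻¹), rpow_pos_of_pos hK _, ?_⟩
  rw [← rpow_mul hK.le, show -(α + 1)⁻¹ * -α = 1 + -(α + 1)⁻¹ by field_simp; ring,
    rpow_add hK, rpow_one]

theorem exists_solution_of_asymmetryRatio_eq {α a b c : ℝ} (ha : 0 < a) (hα : -1 < α)
    (hc0 : 0 < c) (hc1 : c < 1) (hratio : asymmetryRatio α c = -(b / a)) :
    ∃ x y : ℝ, 0 < x - y ∧ x - y < x + y ∧
      (x + y) ^ (-α) = a * x + b * y ∧ (x - y) ^ (-α) = a * x - b * y := by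
  set s := c ^ α with hs
  have hs0 : 0 < s := rpow_pos_of_pos hc0 α
  have hb : b * ((1 - c) * (1 + s)) = -(a * ((1 - s) * (1 + c))) := by
    unfold asymmetryRatio at hratio
    rw [← hs] at hratio
    field_simp [sub_ne_zero.mpr hc1.ne'] at hratio
    linear_combination hratio
  obtain ⟨u, hu, hscale⟩ :=
    exists_rpow_neg_eq_mul (K := a * (1 + c) * s / (1 + s)) (α := α) (by positivity) (by linarith)
  have hcu : (c * u) ^ (-α) = s⁻¹ * u ^ (-α) := by
    rw [mul_rpow hc0.le hu.le, rpow_neg hc0.le]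
  refine ⟨(u + c * u) / 2, (u - c * u) / 2, by nlinarith, by nlinarith, ?_, ?_⟩
  · rw [show (u + c * u) / 2 + (u - c * u) / 2 = u by ring, hscale]
    field_simp
    linear_combination -hb
  · rw [show (u + c * u) / 2 - (u - c * u) / 2 = c * u by ring, hcu, hscale]
    field_simp
    linear_combination hb

/-- the reduced 2×2 Mossay–Tabuchi system admits a solution with y ≠ 0
when ε·λ_b/λ_a < −1. -/
theorem exists_asymmetric_solution (lamA lamB ε : ℝ)
    (hA : 0 < lamA) (hB : |lamB| < lamA) (hε : 0 < ε)
    (hτε : ε * lamB / lamA < -1) :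
    ∃ x y : ℝ, y ≠ 0 ∧ 0 < x + y ∧ 0 < x - y ∧
      0 < lamA * x + lamB * y ∧ 0 < lamA * x - lamB * y ∧
      (x + y) ^ (-1 / ε) = lamA * x + lamB * y ∧
      (x - y) ^ (-1 / ε) = lamA * x - lamB * y := by
  have hα : 0 < 1 / ε := by positivity
  have hr : -(lamB / lamA) ∈ Ioo (1 / ε) 1 := by
    constructor
    · rw [mul_div_assoc] at hτε
      rw [div_lt_iff₀ hε]
      linarith
    · rw [neg_lt, lt_div_iff₀ hA]
      linarith [neg_abs_le lamB]
  obtain ⟨c, ⟨hc0, hc1⟩, hc⟩ := Ioo_subset_image_asymmetryRatio hα hr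
  obtain ⟨x, y, hxy, hyx, hp, hq⟩ :=
    exists_solution_of_asymmetryRatio_eq hA (by linarith) hc0 hc1 hc
  rw [neg_div]
  refine ⟨x, y, by linarith, by linarith, hxy, ?_, ?_, hp, hq⟩
  · rw [← hp]; exact rpow_pos_of_pos (by linarith) _
  · rw [← hq]; exact rpow_pos_of_pos hxy _
end
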